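/- Let θ be an equilibrium of a weighted graph G. If λ is an eigenvalue of the Hessian U''_θ of G at θ with eigenvector (x_u)_{u ∈ VG}, then λ is an eigenvalue of the Hessian U''_{θ^σ} of the k-spinning S_k(G) at the lift θ^σ, with eigenvector given by x_{(u,i)} = x_u. -/

import Mathlib

open Real Finset

/-- Adjacency of the `k`-spinning of a weighted graph with oriented weight
function `w` (each edge carries its weight in exactly one direction). -/
def spinAdj {V : Type*} (k : ℕ) (w : V → V → ℕ) (x y : V × ZMod k) : Prop :=
  (y.2 - x.2).val < w x.1 y.1 ∨ (x.2 - y.2).val < w y.1 x.1 ∨ (x.1 = y.1 ∧ x.2 ≠ y.2)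

instance {V : Type*} [DecidableEq V] (k : ℕ) (w : V → V → ℕ) (x y : V × ZMod k) :
    Decidable (spinAdj k w x y) := by unfold spinAdj; infer_instance

/-- Hessian of the Kuramoto potential of the weighted graph `G` at `θ`. -/
noncomputable def hessW {V : Type*} [Fintype V] [DecidableEq V]
    (w : V → V → ℕ) (θ : V → ℝ) : Matrix V V ℝ :=
  fun u v => if u = v then ∑ x, ((w x v + w v x : ℕ) : ℝ) * Real.cos (θ x - θ v)
             else -(((w u v + w v u : ℕ) : ℝ) * Real.cos (θ u - θ v))

/-- Hessian of the Kuramoto potential of the (unweighted) `k`-spinning `S_k(G)`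
at the lifted point `θ^σ`. -/
noncomputable def hessS {V : Type*} [Fintype V] [DecidableEq V]
    (k : ℕ) [NeZero k] (w : V → V → ℕ) (θ : V → ℝ) :
    Matrix (V × ZMod k) (V × ZMod k) ℝ :=
  fun x y => if x = y then ∑ z, (if spinAdj k w x z then Real.cos (θ z.1 - θ x.1) else 0)
             else if spinAdj k w x y then -Real.cos (θ x.1 - θ y.1) else 0

open scoped Matrix

/-! Both Hessians are Laplacians of weighted adjacency matrices with zero diagonal, so
`(L *ᵥ f) p = ∑ q, A p q * (f p - f q)`. For a fiber-constant vector the sum over the fiber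
above `v ≠ u` only counts the neighbours of `(u, i)` in it, and there are exactly
`w u v + w v u` of them; the fiber above `u` itself contributes nothing since `f p - f q = 0`. -/

theorem Matrix.mulVec_apply_eq_sum_mul_sub {n R : Type*} [Fintype n] [DecidableEq n]
    [CommRing R] {L A : Matrix n n R} (hdiag : ∀ p, L p p = ∑ q, A p q)
    (hoff : ∀ p q, p ≠ q → L p q = -A p q) (hA : ∀ p, A p p = 0) (f : n → R) (p : n) :
    (L *ᵥ f) p = ∑ q, A p q * (f p - f q) := by
  have hL : ∀ q, L p q * f q = (if p = q then (∑ r, A p r) * f p else 0) - A p q * f q := by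
    intro q
    by_cases hpq : p = q
    · subst hpq
      simp [hdiag, hA]
    · simp [hoff p q hpq, hpq]
  simp only [Matrix.mulVec, dotProduct, hL, sum_sub_distrib, sum_ite_eq, mem_univ, if_true,
    mul_sub, sum_mul]

theorem ZMod.card_filter_val_lt {k a : ℕ} [NeZero k] (ha : a ≤ k) :
    #{d : ZMod k | d.val < a} = a := by
  rw [← card_range a]
  refine card_bij (fun d _ => d.val) (by simp) (fun _ _ _ _ h => ZMod.val_injective k h) ?_
  intro n hn
  have hnk : n < k := (mem_range.1 hn).trans_le ha
  exact ⟨n, by simpa [ZMod.val_cast_of_lt hnk] using hn, ZMod.val_cast_of_lt hnk⟩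

section Spinning

variable {V : Type*} {k : ℕ} {w : V → V → ℕ}

theorem not_spinAdj_self (horient : ∀ u v, w u v = 0 ∨ w v u = 0) (p : V × ZMod k) :
    ¬ spinAdj k w p p := by
  have hw : w p.1 p.1 = 0 := (horient p.1 p.1).elim id id
  simp [spinAdj, hw]

variable [DecidableEq V] [NeZero k]

theorem card_spinAdj_fiber (horient : ∀ u v, w u v = 0 ∨ w v u = 0)
    (hmax : ∀ u v, w u v ≤ k) {u v : V} (huv : u ≠ v) (i : ZMod k) :
    #{j | spinAdj k w (u, i) (v, j)} = w u v + w v u := by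
  rcases horient u v with h | h
  · have hadj : ∀ j, spinAdj k w (u, i) (v, j) ↔ (i - j).val < w v u := by
      simp [spinAdj, h, huv]
    simp_rw [hadj]
    rw [h, zero_add, card_equiv (Equiv.subLeft i) (t := {d | d.val < w v u}) (by simp),
      ZMod.card_filter_val_lt (hmax v u)]
  · have hadj : ∀ j, spinAdj k w (u, i) (v, j) ↔ (j - i).val < w u v := by
      simp [spinAdj, h, huv]
    simp_rw [hadj]
    rw [h, add_zero, card_equiv (Equiv.subRight i) (t := {d | d.val < w u v}) (by simp),
      ZMod.card_filter_val_lt (hmax u v)]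

variable [Fintype V]

theorem hessW_mulVec_apply (horient : ∀ u v, w u v = 0 ∨ w v u = 0) (θ x : V → ℝ) (u : V) :
    (hessW w θ *ᵥ x) u =
      ∑ v, ((w u v + w v u : ℕ) : ℝ) * Real.cos (θ u - θ v) * (x u - x v) := by
  refine Matrix.mulVec_apply_eq_sum_mul_sub
    (A := fun u v => ((w u v + w v u : ℕ) : ℝ) * Real.cos (θ u - θ v))
    (fun v => ?_) (fun u v huv => ?_) (fun v => ?_) x u
  · simp only [hessW, if_true]
    refine sum_congr rfl fun y _ => ?_
    rw [add_comm (w y v), ← Real.cos_neg, neg_sub]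
  · simp [hessW, huv]
  · simp [(horient v v).elim id id]

theorem hessS_mulVec_apply (horient : ∀ u v, w u v = 0 ∨ w v u = 0) (θ : V → ℝ)
    (f : V × ZMod k → ℝ) (p : V × ZMod k) :
    (hessS k w θ *ᵥ f) p =
      ∑ q, (if spinAdj k w p q then Real.cos (θ p.1 - θ q.1) else 0) * (f p - f q) := by
  refine Matrix.mulVec_apply_eq_sum_mul_sub
    (A := fun q r => if spinAdj k w q r then Real.cos (θ q.1 - θ r.1) else 0)
    (fun q => ?_) (fun q r hqr => ?_) (fun q => ?_) f p
  · simp only [hessS, if_true]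
    refine sum_congr rfl fun r _ => ?_
    rw [← Real.cos_neg, neg_sub]
  · simp only [hessS, if_neg hqr]
    split_ifs <;> simp
  · simp [not_spinAdj_self horient q]

theorem hessS_mulVec_lift_apply (horient : ∀ u v, w u v = 0 ∨ w v u = 0)
    (hmax : ∀ u v, w u v ≤ k) (θ x : V → ℝ) (u : V) (i : ZMod k) :
    (hessS k w θ *ᵥ fun p => x p.1) (u, i) = (hessW w θ *ᵥ x) u := by
  rw [hessS_mulVec_apply horient, hessW_mulVec_apply horient, Fintype.sum_prod_type]
  refine sum_congr rfl fun v _ => ?_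
  by_cases huv : u = v
  · subst huv
    simp
  · simp only [ite_mul, zero_mul]
    rw [sum_ite, sum_const_zero, add_zero, sum_const, card_spinAdj_fiber horient hmax huv,
      nsmul_eq_mul, mul_assoc]

end Spinning

theorem eigenvalue_lifts_to_spinning_general {V : Type*} [Fintype V] [DecidableEq V]
    (w : V → V → ℕ)
    (horient : ∀ u v, w u v = 0 ∨ w v u = 0)
    (k : ℕ) [NeZero k] (hmax : ∀ u v, w u v ≤ k)
    (θ : V → ℝ)
    (lam : ℝ) (x : V → ℝ)
    (heig : (hessW w θ).mulVec x = lam • x) :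
    (hessS k w θ).mulVec (fun p => x p.1) = lam • fun p : V × ZMod k => x p.1 := by
  funext ⟨u, i⟩
  rw [hessS_mulVec_lift_apply horient hmax, heig]
  rfl

/-- Every eigenvalue of the Hessian of `G` at an equilibrium `θ` lifts to an
eigenvalue of the Hessian of the `k`-spinning at `θ^σ`, with the fiber-constant
lift of the eigenvector as eigenvector. -/
theorem eigenvalue_lifts_to_spinning {V : Type*} [Fintype V] [DecidableEq V]
    (w : V → V → ℕ) (hdiag : ∀ v, w v v = 0)
    (horient : ∀ u v, w u v = 0 ∨ w v u = 0)
    (k : ℕ) [NeZero k] (hmax : ∀ u v, w u v ≤ k)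
    (θ : V → ℝ)
    (hequil : ∀ v, ∑ u, ((w u v + w v u : ℕ) : ℝ) * Real.sin (θ u - θ v) = 0)
    (lam : ℝ) (x : V → ℝ)
    (heig : (hessW w θ).mulVec x = lam • x) :
    (hessS k w θ).mulVec (fun p => x p.1) = lam • fun p : V × ZMod k => x p.1 :=
  eigenvalue_lifts_to_spinning_general w horient k hmax θ lam x heig
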